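/- Let C be a Boolean formula computing a Boolean function f : {0,1}^n → {0,1}, and let X = (x^1 < x^2 < ⋯ < x^k) be any chain in {0,1}^n. Then not_d(C, x^k) − not_d(C, x^1) ≥ d_X(f). In particular, taking a chain with d_X(f) = d(f), C contains at least d(f) NOT nodes. -/

import Mathlib

namespace InversionComplexity

open Classical

/-- A chain is a strictly increasing sequence of Boolean vectors in `{0,1}^n`
(pointwise order on `Fin n → Bool`). -/
def IsChain {n : ℕ} (X : List (Fin n → Bool)) : Prop :=
  X.Chain' (· < ·)

/-- The decrease `d_X(f)` of `f` on a sequence `X`: the number of consecutive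
indices `i` with `f (x^i) = 1` and `f (x^{i+1}) = 0`. -/
def decOn {n : ℕ} (f : (Fin n → Bool) → Bool) : List (Fin n → Bool) → ℕ
  | a :: b :: t => (if f a = true ∧ f b = false then 1 else 0) + decOn f (b :: t)
  | _ => 0

/-- The decrease `d(f)` of `f`: the maximum of `d_X(f)` over all chains `X`. -/
noncomputable def dec {n : ℕ} (f : (Fin n → Bool) → Bool) : ℕ :=
  sSup { m | ∃ X : List (Fin n → Bool), IsChain X ∧ decOn f X = m }

/-- Boolean formulas: finite trees built from variable leaves, constant leaves,
binary AND/OR nodes and unary NOT nodes. -/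
inductive Formula (n : ℕ) : Type
  | var : Fin n → Formula n
  | const : Bool → Formula n
  | and : Formula n → Formula n → Formula n
  | or : Formula n → Formula n → Formula n
  | not : Formula n → Formula n

/-- Evaluation of a formula on an input. -/
def Formula.eval {n : ℕ} (x : Fin n → Bool) : Formula n → Bool
  | .var i => x i
  | .const b => b
  | .and C D => C.eval x && D.eval x
  | .or C D => C.eval x || D.eval x
  | .not C => !(C.eval x)

/-- `not(C)`: the number of NOT nodes of a formula. -/
def Formula.notCount {n : ℕ} : Formula n → ℕ
  | .var _ => 0
  | .const _ => 0
  | .and C D => C.notCount + D.notCount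
  | .or C D => C.notCount + D.notCount
  | .not C => C.notCount + 1

/-- `not_d(C, x)`: the number of NOT nodes of `C` in the *down* state on input `x`,
i.e. whose input subformula evaluates to `1`. -/
def Formula.notDown {n : ℕ} (x : Fin n → Bool) : Formula n → ℕ
  | .var _ => 0
  | .const _ => 0
  | .and C D => C.notDown x + D.notDown x
  | .or C D => C.notDown x + D.notDown x
  | .not C => C.notDown x + (if C.eval x = true then 1 else 0)

/-- A formula computes a Boolean function `f` if it evaluates to `f x` on every input `x`. -/
def Formula.Computes {n : ℕ} (C : Formula n) (f : (Fin n → Bool) → Bool) : Prop :=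
  ∀ x, C.eval x = f x

/-- `I_f(f)`: the inversion complexity of `f` in formulas, the minimum number of
NOT nodes over all formulas computing `f`. -/
noncomputable def invFormula {n : ℕ} (f : (Fin n → Bool) → Bool) : ℕ :=
  sInf { k | ∃ C : Formula n, C.Computes f ∧ C.notCount = k }

/-- The set `S` of all vectors `x` such that every chain starting with `x`
has decrease `0` with respect to `f`. -/
def startSet {n : ℕ} (f : (Fin n → Bool) → Bool) : Set (Fin n → Bool) :=
  { x | ∀ X : List (Fin n → Bool), IsChain X → X.head? = some x → decOn f X = 0 }

/-! For inputs `x ≤ y` one has `not_d(C, x) + [C falls from 1 to 0] ≤ not_d(C, y)`, by induction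
on the formula: a fall of an AND or OR node is a fall of one of its inputs, and a fall of a NOT
node is a rise of its input, which puts that node in the down state. Summing over the consecutive
pairs of a chain gives the first claim; the second follows from `not_d(C, ·) ≤ not(C)`. -/

def fall (b b' : Bool) : ℕ := (b && !b').toNat

theorem fall_eq_zero_of_le {b b' : Bool} (h : b ≤ b') : fall b b' = 0 := by
  revert b b'; decide

theorem fall_and_le (a a' b b' : Bool) : fall (a && b) (a' && b') ≤ fall a a' + fall b b' := by
  revert a a' b b'; decide

theorem fall_or_le (a a' b b' : Bool) : fall (a || b) (a' || b') ≤ fall a a' + fall b b' := by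
  revert a a' b b'; decide

theorem ite_add_fall_not_le (a a' : Bool) :
    (if a = true then 1 else 0) + fall (!a) (!a') ≤ fall a a' + if a' = true then 1 else 0 := by
  revert a a'; decide

theorem decOn_cons_cons {n : ℕ} (g : (Fin n → Bool) → Bool) (a b : Fin n → Bool)
    (t : List (Fin n → Bool)) :
    decOn g (a :: b :: t) = fall (g a) (g b) + decOn g (b :: t) := by
  simp only [decOn, fall]
  cases g a <;> cases g b <;> rfl

namespace Formula

variable {n : ℕ}

theorem notDown_le_notCount (C : Formula n) (x : Fin n → Bool) :
    C.notDown x ≤ C.notCount := by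
  induction C with
  | var | const => exact le_refl 0
  | and A B ihA ihB | or A B ihA ihB => exact Nat.add_le_add ihA ihB
  | not A ihA =>
    simp only [notDown, notCount]
    split <;> omega

theorem notDown_add_fall_le (C : Formula n) {x y : Fin n → Bool} (hxy : x ≤ y) :
    C.notDown x + fall (C.eval x) (C.eval y) ≤ C.notDown y := by
  induction C with
  | var i => simp only [notDown, eval, fall_eq_zero_of_le (hxy i), le_refl]
  | const b => simp only [notDown, eval, fall_eq_zero_of_le (le_refl b), le_refl]
  | and A B ihA ihB =>
    have := fall_and_le (A.eval x) (A.eval y) (B.eval x) (B.eval y)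
    simp only [notDown, eval]
    omega
  | or A B ihA ihB =>
    have := fall_or_le (A.eval x) (A.eval y) (B.eval x) (B.eval y)
    simp only [notDown, eval]
    omega
  | not A ihA =>
    have := ite_add_fall_not_le (A.eval x) (A.eval y)
    simp only [notDown, eval]
    omega

theorem notDown_head_add_decOn_le_notDown_getLast (C : Formula n) :
    ∀ (X : List (Fin n → Bool)) (_ : IsChain X) (hne : X ≠ []),
      C.notDown (X.head hne) + decOn (C.eval ·) X ≤ C.notDown (X.getLast hne)
  | [a], _, _ => by simp only [decOn, List.head_cons, List.getLast_singleton, add_zero, le_refl]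
  | a :: b :: t, hX, _ => by
    obtain ⟨hab, hbt⟩ := List.isChain_cons_cons.mp hX
    have hstep := C.notDown_add_fall_le hab.le
    have hrest := C.notDown_head_add_decOn_le_notDown_getLast (b :: t) hbt (List.cons_ne_nil b t)
    rw [decOn_cons_cons, List.getLast_cons (List.cons_ne_nil b t)]
    simp only [List.head_cons] at hrest ⊢
    omega

theorem dec_eval_le_notCount (C : Formula n) : dec (C.eval ·) ≤ C.notCount := by
  refine csSup_le' ?_
  rintro _ ⟨_ | ⟨a, Y⟩, hY, rfl⟩
  · exact Nat.zero_le _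
  · have hchain := C.notDown_head_add_decOn_le_notDown_getLast _ hY (List.cons_ne_nil a Y)
    have hlast := C.notDown_le_notCount ((a :: Y).getLast (List.cons_ne_nil a Y))
    omega

end Formula

/-- Along any chain `X = (x^1 < ⋯ < x^k)`,
`not_d(C, x^k) - not_d(C, x^1) ≥ d_X(f)`; in particular, a formula `C`
computing `f` contains at least `d(f)` NOT nodes. -/
theorem notDown_chain_lower_bound (n : ℕ) (f : (Fin n → Bool) → Bool)
    (C : Formula n) (hC : C.Computes f)
    (X : List (Fin n → Bool)) (hX : IsChain X) (hne : X ≠ []) :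
    C.notDown (X.head hne) + decOn f X ≤ C.notDown (X.getLast hne) ∧
    dec f ≤ C.notCount := by
  obtain rfl : (C.eval ·) = f := funext hC
  exact ⟨C.notDown_head_add_decOn_le_notDown_getLast X hX hne, C.dec_eval_le_notCount⟩

end InversionComplexity
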